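/- Let U : [0,∞) → ℝ with U ∈ W^{3,∞} and z U', z U'', z U''' ∈ L^∞. Let φ be smooth with φ(·,0)=0 and ∂_z φ = -b. Then for ũ, b ∈ L²(Ω): |∫_Ω (μ U' ∂²_z φ - ∂²_z(U'φ)) ũ dxdz| ≤ C (‖b‖_{L²} + ‖∂_z b‖_{L²}) ‖ũ‖_{L²}, where C depends only on μ, ‖U'‖_{L^∞}, ‖U''‖_{L^∞}, ‖z U'''‖_{L^∞}. -/

import Mathlib

open Real Filter Topology MeasureTheory Set

/-- The domain `Ω = 𝕋 × (0,∞)`, modeled as `(0,1] × (0,∞)` with period-1 functions. -/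
noncomputable def μΩ : Measure (ℝ × ℝ) :=
  (volume.restrict (Ioc (0:ℝ) 1)).prod (volume.restrict (Ioi (0:ℝ)))

noncomputable def dZ (f : ℝ → ℝ → ℝ) (x z : ℝ) : ℝ := deriv (fun z' => f x z') z

/-- squared L² norm on Ω -/
noncomputable def sqL2 (f : ℝ → ℝ → ℝ) : ℝ := ∫ p, (f p.1 p.2)^2 ∂μΩ

lemma cs_int {α : Type*} [MeasurableSpace α] (ν : Measure α) (f g : α → ℝ)
    (hfm : AEStronglyMeasurable f ν) (hgm : AEStronglyMeasurable g ν)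
    (hf : Integrable (fun a => f a ^ 2) ν) (hg : Integrable (fun a => g a ^ 2) ν) :
    |∫ a, f a * g a ∂ν| ≤ Real.sqrt (∫ a, f a ^ 2 ∂ν) * Real.sqrt (∫ a, g a ^ 2 ∂ν) := by
  have h22 : Real.HolderConjugate 2 2 := Real.HolderConjugate.two_two
  have hf2 : MemLp f (ENNReal.ofReal 2) ν := by
    rw [show ENNReal.ofReal 2 = 2 by norm_num]
    exact (memLp_two_iff_integrable_sq hfm).2 hf
  have hg2 : MemLp g (ENNReal.ofReal 2) ν := by
    rw [show ENNReal.ofReal 2 = 2 by norm_num]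
    exact (memLp_two_iff_integrable_sq hgm).2 hg
  have H := integral_mul_norm_le_Lp_mul_Lq h22 hf2 hg2
  have e1 : ∫ a, ‖f a‖ ^ (2:ℝ) ∂ν = ∫ a, f a ^ 2 ∂ν := by
    refine integral_congr_ae (Eventually.of_forall fun a => ?_)
    beta_reduce
    rw [show ((2:ℝ) = ((2:ℕ):ℝ)) by norm_num, Real.rpow_natCast]
    simp [Real.norm_eq_abs, sq_abs]
  have e2 : ∫ a, ‖g a‖ ^ (2:ℝ) ∂ν = ∫ a, g a ^ 2 ∂ν := by
    refine integral_congr_ae (Eventually.of_forall fun a => ?_)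
    beta_reduce
    rw [show ((2:ℝ) = ((2:ℕ):ℝ)) by norm_num, Real.rpow_natCast]
    simp [Real.norm_eq_abs, sq_abs]
  have h1 : |∫ a, f a * g a ∂ν| ≤ ∫ a, ‖f a‖ * ‖g a‖ ∂ν := by
    rw [← Real.norm_eq_abs]
    refine (norm_integral_le_integral_norm _).trans_eq ?_
    refine integral_congr_ae (Eventually.of_forall fun a => ?_)
    simp [norm_mul]
  rw [e1, e2] at H
  refine h1.trans (H.trans_eq ?_)
  rw [Real.sqrt_eq_rpow, Real.sqrt_eq_rpow]

lemma one_le_itop : (1 : WithTop ℕ∞) ≤ ((⊤:ℕ∞) : WithTop ℕ∞) := by exact_mod_cast le_top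

noncomputable def pdz (F : ℝ × ℝ → ℝ) (p : ℝ × ℝ) : ℝ := fderiv ℝ F p (0, 1)

lemma hasDerivAt_pdz {F : ℝ × ℝ → ℝ} (hF : ContDiff ℝ (⊤:ℕ∞) F) (x z : ℝ) :
    HasDerivAt (fun z' => F (x, z')) (pdz F (x, z)) z := by
  have h1 : HasDerivAt (fun z' : ℝ => ((x, z') : ℝ × ℝ)) ((0:ℝ), (1:ℝ)) z :=
    (hasDerivAt_const z x).prodMk (hasDerivAt_id z)
  exact (hF.differentiable (by simp) (x, z)).hasFDerivAt.comp_hasDerivAt z h1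

lemma pdz_contDiff {F : ℝ × ℝ → ℝ} (hF : ContDiff ℝ (⊤:ℕ∞) F) : ContDiff ℝ (⊤:ℕ∞) (pdz F) :=
  (hF.fderiv_right le_rfl).clm_apply contDiff_const

section
variable {f : ℝ → ℝ}

lemma deriv_cont (hf : ContDiff ℝ (⊤:ℕ∞) f) : Continuous (deriv f) :=
  (contDiff_infty_iff_deriv.mp hf).2.continuous

lemma ftc_sq (hf : ContDiff ℝ (⊤:ℕ∞) f) (hf0 : f 0 = 0)
    (hgint : IntegrableOn (fun z => deriv f z ^ 2) (Ioi 0)) {t : ℝ} (ht : 0 < t) :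
    f t ^ 2 ≤ t * ∫ z in Ioc 0 t, deriv f z ^ 2 := by
  have hgc : Continuous (deriv f) := deriv_cont hf
  have hftc : f t = ∫ z in Set.Ioc 0 t, deriv f z := by
    rw [← intervalIntegral.integral_of_le ht.le,
      intervalIntegral.integral_deriv_eq_sub
        (fun z _ => (hf.differentiable (by simp)).differentiableAt)
        (hgc.intervalIntegrable 0 t), hf0, sub_zero]
  have hg2 : IntegrableOn (fun z => deriv f z ^ 2) (Ioc 0 t) :=
    hgint.mono_set Ioc_subset_Ioi_self
  have h1 : IntegrableOn (fun _ : ℝ => (1:ℝ) ^ 2) (Ioc 0 t) := by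
    simp [integrableOn_const, measure_Ioc_lt_top]
  have hcs := cs_int (volume.restrict (Ioc 0 t)) (fun _ => (1:ℝ)) (deriv f)
    aestronglyMeasurable_const hgc.aestronglyMeasurable h1 hg2
  simp only [one_mul] at hcs
  have hvol : ∫ _z in Ioc 0 t, ((1:ℝ)) ^ 2 = t := by
    simp [Real.volume_Ioc, ht.le]
  rw [hvol] at hcs
  have hI0 : (0:ℝ) ≤ ∫ z in Ioc 0 t, deriv f z ^ 2 :=
    integral_nonneg fun z => sq_nonneg _
  calc f t ^ 2 = |f t| ^ 2 := (sq_abs _).symm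
    _ ≤ (Real.sqrt t * Real.sqrt (∫ z in Ioc 0 t, deriv f z ^ 2)) ^ 2 := by
        rw [hftc]; exact pow_le_pow_left₀ (abs_nonneg _) hcs 2
    _ = t * ∫ z in Ioc 0 t, deriv f z ^ 2 := by
        rw [mul_pow, Real.sq_sqrt ht.le, Real.sq_sqrt hI0]

lemma hardy_interval (hf : ContDiff ℝ (⊤:ℕ∞) f) (hf0 : f 0 = 0)
    (hgint : IntegrableOn (fun z => deriv f z ^ 2) (Ioi 0))
    {ε R : ℝ} (hε : 0 < ε) (hεR : ε ≤ R) :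
    ∫ z in Ioc ε R, (f z / z)^2 ≤ 6 * ∫ z in Ioi 0, deriv f z ^ 2 := by
  set g := deriv f with hg
  have hgc : Continuous g := deriv_cont hf
  have hfc : Continuous f := hf.continuous
  set B := ∫ z in Ioi 0, g z ^ 2 with hB
  have hB0 : 0 ≤ B := integral_nonneg fun z => sq_nonneg _
  have hR : 0 < R := hε.trans_le hεR
  have hne : ∀ z ∈ uIcc ε R, z ≠ 0 := by
    intro z hz
    rcases hz with ⟨h1, _⟩
    have hmin : ε ⊓ R = ε := min_eq_left hεR
    exact (lt_of_lt_of_le hε (hmin ▸ h1)).ne'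
  have hcont1 : ContinuousOn (fun z => (f z / z) ^ 2) (uIcc ε R) :=
    ((hfc.continuousOn.div continuousOn_id hne)).pow 2
  have hcont2 : ContinuousOn (fun z => (f z / z) * g z) (uIcc ε R) :=
    (hfc.continuousOn.div continuousOn_id hne).mul hgc.continuousOn
  -- IBP
  have hibp : ∫ z in ε..R, ((f z / z) ^ 2 - 2 * ((f z / z) * g z))
      = -(f R ^ 2) * R⁻¹ - (-(f ε ^ 2) * ε⁻¹) := by
    apply intervalIntegral.integral_eq_sub_of_hasDerivAt
    · intro z hz
      have hzpos : 0 < z := by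
        rcases hz with ⟨h1, _⟩
        have hmin : ε ⊓ R = ε := min_eq_left hεR
        exact lt_of_lt_of_le hε (hmin ▸ h1)
      have hd1 : HasDerivAt f (g z) z := (hf.differentiable (by simp) z).hasDerivAt
      have hd2 : HasDerivAt (fun y => f y ^ 2) (2 * f z ^ 1 * g z) z := hd1.pow 2
      have hd3 : HasDerivAt (fun y : ℝ => y⁻¹) (-(z ^ 2)⁻¹) z := hasDerivAt_inv hzpos.ne'
      have hd := hd2.neg.mul hd3
      have heq : -(2 * f z ^ 1 * g z) * z⁻¹ + -(f z ^ 2) * -((z ^ 2)⁻¹)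
          = (f z / z) ^ 2 - 2 * ((f z / z) * g z) := by
        field_simp
        ring
      exact heq ▸ hd
    · exact (hcont1.sub (continuousOn_const.mul hcont2)).intervalIntegrable
  -- set integrals
  set A := ∫ z in Ioc ε R, (f z / z) ^ 2 with hA
  set D := ∫ z in Ioc ε R, (f z / z) * g z with hD
  have hsub : Ioc ε R ⊆ Ioi 0 := fun z hz => lt_of_lt_of_le hε hz.1.le
  have hneI : ∀ z ∈ Icc ε R, z ≠ 0 := fun z hz => (lt_of_lt_of_le hε hz.1).ne'
  have hq : ContinuousOn (fun z => f z / z) (Icc ε R) :=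
    hfc.continuousOn.div continuousOn_id hneI
  have hqint : IntegrableOn (fun z => (f z / z) ^ 2) (Ioc ε R) :=
    ((hq.pow 2).integrableOn_Icc).mono_set Ioc_subset_Icc_self
  have hgint2 : IntegrableOn (fun z => g z ^ 2) (Ioc ε R) := hgint.mono_set hsub
  have hA0 : 0 ≤ A := integral_nonneg fun z => sq_nonneg _
  have hqm : AEStronglyMeasurable (fun z => f z / z) (volume.restrict (Ioc ε R)) :=
    ((hq.mono Ioc_subset_Icc_self).aestronglyMeasurable measurableSet_Ioc)
  have hDb : |D| ≤ Real.sqrt A * Real.sqrt B := by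
    have hcs := cs_int (volume.restrict (Ioc ε R)) (fun z => f z / z) g
      hqm hgc.aestronglyMeasurable hqint hgint2
    refine hcs.trans ?_
    have hmono : ∫ z in Ioc ε R, g z ^ 2 ≤ B := by
      refine setIntegral_mono_set hgint ?_ hsub.eventuallyLE
      filter_upwards with z using sq_nonneg _
    exact mul_le_mul_of_nonneg_left (Real.sqrt_le_sqrt hmono) (Real.sqrt_nonneg _)
  have hfε : f ε ^ 2 * ε⁻¹ ≤ B := by
    have h1 := ftc_sq hf hf0 hgint hε
    have h2 : ∫ z in Ioc 0 ε, deriv f z ^ 2 ≤ B := by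
      refine setIntegral_mono_set hgint ?_ Ioc_subset_Ioi_self.eventuallyLE
      filter_upwards with z using sq_nonneg _
    have h3 : f ε ^ 2 ≤ ε * B := h1.trans (by nlinarith)
    calc f ε ^ 2 * ε⁻¹ ≤ (ε * B) * ε⁻¹ := mul_le_mul_of_nonneg_right h3 (by positivity)
      _ = B := by field_simp
  have hfR : 0 ≤ f R ^ 2 * R⁻¹ := by positivity
  -- combine via hibp
  have hsplit : A - 2 * D = f ε ^ 2 * ε⁻¹ - f R ^ 2 * R⁻¹ := by
    have e1 : ∫ z in ε..R, ((f z / z) ^ 2 - 2 * ((f z / z) * g z))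
        = (∫ z in ε..R, (f z / z) ^ 2) - ∫ z in ε..R, 2 * ((f z / z) * g z) :=
      intervalIntegral.integral_sub hcont1.intervalIntegrable
        (continuousOn_const.mul hcont2).intervalIntegrable
    have e2 : ∫ z in ε..R, (f z / z) ^ 2 = A := intervalIntegral.integral_of_le hεR
    have e3 : ∫ z in ε..R, 2 * ((f z / z) * g z) = 2 * D := by
      rw [intervalIntegral.integral_const_mul, intervalIntegral.integral_of_le hεR]
    rw [e1, e2, e3] at hibp
    rw [hibp]; ring
  have hkey : A ≤ 2 * (Real.sqrt A * Real.sqrt B) + B := by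
    have : A = 2 * D + (f ε ^ 2 * ε⁻¹ - f R ^ 2 * R⁻¹) := by linarith
    have hDle : D ≤ |D| := le_abs_self D
    nlinarith
  have hsA := Real.sq_sqrt hA0
  have hsB := Real.sq_sqrt hB0
  nlinarith [sq_nonneg (Real.sqrt A - 2 * Real.sqrt B), Real.sqrt_nonneg A, Real.sqrt_nonneg B]

lemma hardy_lintegral (hf : ContDiff ℝ (⊤:ℕ∞) f) (hf0 : f 0 = 0)
    (hgint : IntegrableOn (fun z => deriv f z ^ 2) (Ioi 0)) :
    ∫⁻ z in Ioi 0, ENNReal.ofReal ((f z / z) ^ 2)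
      ≤ ENNReal.ofReal (6 * ∫ z in Ioi 0, deriv f z ^ 2) := by
  have hU : Ioi (0:ℝ) = ⋃ n : ℕ, Ioc (1 / (n + 1) : ℝ) (n + 1) := by
    ext z
    simp only [mem_Ioi, mem_iUnion, mem_Ioc]
    constructor
    · intro hz
      obtain ⟨n, hn⟩ := exists_nat_ge (max (1 / z) z)
      have h1 : 1 / z ≤ n := le_trans (le_max_left _ _) hn
      have h2 : z ≤ n := le_trans (le_max_right _ _) hn
      refine ⟨n, ?_, by linarith⟩
      rw [div_lt_iff₀ (by positivity)]
      rw [div_le_iff₀ hz] at h1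
      nlinarith
    · rintro ⟨n, h1, _⟩
      exact lt_trans (by positivity) h1
  have hdir : Directed (· ⊆ ·) (fun n : ℕ => Ioc (1 / (n + 1) : ℝ) (n + 1)) := by
    refine (monotone_nat_of_le_succ fun n => ?_).directed_le
    apply Ioc_subset_Ioc
    · apply one_div_le_one_div_of_le (by positivity)
      push_cast; linarith
    · push_cast; linarith
  conv_lhs => rw [hU, setLIntegral_iUnion_of_directed _ hdir]
  refine iSup_le fun n => ?_
  have hεpos : (0:ℝ) < 1 / (n + 1) := by positivity
  have hεR : (1 / (n + 1) : ℝ) ≤ n + 1 := by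
    rw [div_le_iff₀ (by positivity)]
    nlinarith [Nat.cast_nonneg (α := ℝ) n]
  have hint : IntegrableOn (fun z => (f z / z) ^ 2) (Ioc (1 / (n + 1) : ℝ) (n + 1)) := by
    have hne : ∀ z ∈ Icc (1 / (n + 1) : ℝ) (n + 1), z ≠ 0 :=
      fun z hz => (lt_of_lt_of_le hεpos hz.1).ne'
    exact ((hf.continuous.continuousOn.div continuousOn_id hne).pow 2).integrableOn_Icc.mono_set
      Ioc_subset_Icc_self
  rw [← ofReal_integral_eq_lintegral_ofReal hint
    (by filter_upwards with z using sq_nonneg _)]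
  exact ENNReal.ofReal_le_ofReal (hardy_interval hf hf0 hgint hεpos hεR)

end

lemma int_mul {α : Type*} [MeasurableSpace α] (ν : Measure α) (f u : α → ℝ)
    (hfm : AEStronglyMeasurable f ν) (hum : AEStronglyMeasurable u ν)
    (hf : Integrable (fun a => f a ^ 2) ν) (hu : Integrable (fun a => u a ^ 2) ν) :
    Integrable (fun a => f a * u a) ν := by
  refine ((hf.add hu).const_mul (1/2)).mono' (hfm.mul hum) ?_
  filter_upwards with a
  simp only [Pi.add_apply]
  rw [Real.norm_eq_abs, abs_mul]
  nlinarith [sq_nonneg (|f a| - |u a|), abs_nonneg (f a), abs_nonneg (u a),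
    sq_abs (f a), sq_abs (u a)]

lemma sq_int {α : Type*} [MeasurableSpace α] {ν : Measure α} {f q : α → ℝ} {c : ℝ}
    (hfm : AEStronglyMeasurable f ν)
    (hq : Integrable (fun a => q a ^ 2) ν)
    (hbound : ∀ᵐ a ∂ν, f a ^ 2 ≤ c ^ 2 * q a ^ 2) :
    Integrable (fun a => f a ^ 2) ν := by
  have hsq : AEStronglyMeasurable (fun a => f a ^ 2) ν := by
    have : (fun a => f a ^ 2) = fun a => f a * f a := by ext a; ring
    rw [this]; exact hfm.mul hfm
  refine (hq.const_mul (c ^ 2)).mono' hsq ?_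
  filter_upwards [hbound] with a ha
  rw [Real.norm_eq_abs, abs_of_nonneg (sq_nonneg _)]
  exact ha

lemma piece_bound {α : Type*} [MeasurableSpace α] (ν : Measure α) (f u q : α → ℝ)
    (c : ℝ) (hc : 0 ≤ c)
    (hfm : AEStronglyMeasurable f ν) (hum : AEStronglyMeasurable u ν)
    (hq : Integrable (fun a => q a ^ 2) ν)
    (hbound : ∀ᵐ a ∂ν, f a ^ 2 ≤ c ^ 2 * q a ^ 2)
    (hu : Integrable (fun a => u a ^ 2) ν) {Q T : ℝ}
    (hQ : ∫ a, q a ^ 2 ∂ν ≤ Q) (hT : ∫ a, u a ^ 2 ∂ν ≤ T) (hQ0 : 0 ≤ Q) :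
    |∫ a, f a * u a ∂ν| ≤ c * Real.sqrt Q * Real.sqrt T := by
  have hf2 : Integrable (fun a => f a ^ 2) ν := sq_int hfm hq hbound
  have hcs := cs_int ν f u hfm hum hf2 hu
  refine hcs.trans ?_
  have h1 : ∫ a, f a ^ 2 ∂ν ≤ c ^ 2 * Q := by
    calc ∫ a, f a ^ 2 ∂ν ≤ ∫ a, c ^ 2 * q a ^ 2 ∂ν :=
          integral_mono_ae hf2 (hq.const_mul _) hbound
      _ = c ^ 2 * ∫ a, q a ^ 2 ∂ν := integral_const_mul _ _
      _ ≤ c ^ 2 * Q := mul_le_mul_of_nonneg_left hQ (sq_nonneg c)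
  have h2 : Real.sqrt (∫ a, f a ^ 2 ∂ν) ≤ c * Real.sqrt Q := by
    refine (Real.sqrt_le_sqrt h1).trans ?_
    rw [Real.sqrt_mul (sq_nonneg c), Real.sqrt_sq hc]
  have h3 : Real.sqrt (∫ a, u a ^ 2 ∂ν) ≤ Real.sqrt T := Real.sqrt_le_sqrt hT
  exact mul_le_mul h2 h3 (Real.sqrt_nonneg _) (by positivity)

set_option maxHeartbeats 1000000 in
/-- estimate of the remainder term
`|∫_Ω (μ U' ∂²_z φ - ∂²_z(U'φ)) ũ| ≤ C (‖b‖ + ‖∂_z b‖) ‖ũ‖`, with `C` depending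
only on `μ`, `‖U'‖_∞`, `‖U''‖_∞`, `‖z U'''‖_∞`. -/
theorem stmt_15 (μ : ℝ) (hμ : 0 < μ) (U : ℝ → ℝ) (M₁ M₂ M₃ : ℝ)
    (hU : ContDiff ℝ (⊤ : ℕ∞) U)
    (hM₁ : ∀ z ∈ Ici (0:ℝ), |deriv U z| ≤ M₁)
    (hM₂ : ∀ z ∈ Ici (0:ℝ), |deriv (deriv U) z| ≤ M₂)
    (hM₃ : ∀ z ∈ Ici (0:ℝ), |z * deriv (deriv (deriv U)) z| ≤ M₃) :
    ∃ C > (0:ℝ), ∀ φ b tu : ℝ → ℝ → ℝ,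
      ContDiff ℝ (⊤ : ℕ∞) (fun p : ℝ × ℝ => φ p.1 p.2) →
      (∀ x, φ x 0 = 0) →
      (∀ x z, dZ φ x z = -b x z) →
      Integrable (fun p : ℝ × ℝ => (b p.1 p.2)^2) μΩ →
      Integrable (fun p : ℝ × ℝ => (dZ b p.1 p.2)^2) μΩ →
      Integrable (fun p : ℝ × ℝ => (tu p.1 p.2)^2) μΩ →
      Integrable (fun p : ℝ × ℝ =>
        (μ * deriv U p.2 * dZ (dZ φ) p.1 p.2
          - dZ (dZ (fun x z => deriv U z * φ x z)) p.1 p.2) * tu p.1 p.2) μΩ →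
      |∫ p, (μ * deriv U p.2 * dZ (dZ φ) p.1 p.2
          - dZ (dZ (fun x z => deriv U z * φ x z)) p.1 p.2) * tu p.1 p.2 ∂μΩ|
        ≤ C * (Real.sqrt (sqL2 b) + Real.sqrt (sqL2 (dZ b))) * Real.sqrt (sqL2 tu) := by
  have hM₁0 : 0 ≤ M₁ := (abs_nonneg _).trans (hM₁ 0 (by simp))
  have hM₂0 : 0 ≤ M₂ := (abs_nonneg _).trans (hM₂ 0 (by simp))
  have hM₃0 : 0 ≤ M₃ := by
    have := hM₃ 0 (by simp)
    simpa using (abs_nonneg ((0:ℝ) * deriv (deriv (deriv U)) 0)).trans this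
  refine ⟨|μ - 1| * M₁ + 2 * M₂ + 3 * M₃ + 1, by positivity, ?_⟩
  intro φ b tu hφtop hφ0 hb hbInt hdbInt htuInt hprodInt
  -- smoothness setup
  have hφ' : ContDiff ℝ (⊤:ℕ∞) (fun p : ℝ × ℝ => φ p.1 p.2) := hφtop.of_le (by simp)
  have hU' : ContDiff ℝ (⊤:ℕ∞) U := hU.of_le (by simp)
  have hu1 : ContDiff ℝ (⊤:ℕ∞) (deriv U) := (contDiff_infty_iff_deriv.mp hU').2
  have hu2 : ContDiff ℝ (⊤:ℕ∞) (deriv (deriv U)) := (contDiff_infty_iff_deriv.mp hu1).2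
  have hu3c : Continuous (deriv (deriv (deriv U))) :=
    (contDiff_infty_iff_deriv.mp hu2).2.continuous
  set Φ : ℝ × ℝ → ℝ := fun p => φ p.1 p.2 with hΦdef
  set Ψ : ℝ × ℝ → ℝ := pdz Φ with hΨdef
  have hΨ : ContDiff ℝ (⊤:ℕ∞) Ψ := pdz_contDiff hφ'
  have hψ : ∀ x z, HasDerivAt (fun z' => φ x z') (Ψ (x, z)) z :=
    fun x z => hasDerivAt_pdz hφ' x z
  have hψ2 : ∀ x z, HasDerivAt (fun z' => Ψ (x, z')) (pdz Ψ (x, z)) z :=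
    fun x z => hasDerivAt_pdz hΨ x z
  have hdZφ : ∀ x z, dZ φ x z = Ψ (x, z) := fun x z => (hψ x z).deriv
  have hbeq : ∀ x z, b x z = -Ψ (x, z) := fun x z => by
    have h := hb x z; rw [hdZφ] at h; linarith
  have hdZb : ∀ x z, dZ b x z = -(pdz Ψ (x, z)) := fun x z => by
    have h1 : (fun z' => b x z') = fun z' => -(Ψ (x, z')) := funext fun z' => hbeq x z'
    rw [dZ, h1, deriv.fun_neg, (hψ2 x z).deriv]
  have hdZdZφ : ∀ x z, dZ (dZ φ) x z = pdz Ψ (x, z) := fun x z => by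
    have h1 : (fun z' => dZ φ x z') = fun z' => Ψ (x, z') := funext fun z' => hdZφ x z'
    rw [dZ, h1, (hψ2 x z).deriv]
  -- second derivative of U' φ
  have hG : ∀ x z, dZ (dZ (fun x z => deriv U z * φ x z)) x z
      = deriv (deriv (deriv U)) z * φ x z + 2 * deriv (deriv U) z * Ψ (x, z)
        + deriv U z * pdz Ψ (x, z) := by
    intro x z
    have hinner : ∀ z', dZ (fun x z => deriv U z * φ x z) x z'
        = deriv (deriv U) z' * φ x z' + deriv U z' * Ψ (x, z') := by
      intro z'
      have h1 : HasDerivAt (deriv U) (deriv (deriv U) z') z' :=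
        (hu1.differentiable (by simp) z').hasDerivAt
      exact (h1.mul (hψ x z')).deriv
    have houter : HasDerivAt (fun z' => deriv (deriv U) z' * φ x z' + deriv U z' * Ψ (x, z'))
        ((deriv (deriv (deriv U)) z * φ x z + deriv (deriv U) z * Ψ (x, z))
          + (deriv (deriv U) z * Ψ (x, z) + deriv U z * pdz Ψ (x, z))) z :=
      ((hu2.differentiable (by simp) z).hasDerivAt.mul (hψ x z)).add
        ((hu1.differentiable (by simp) z).hasDerivAt.mul (hψ2 x z))
    calc dZ (dZ (fun x z => deriv U z * φ x z)) x z
        = deriv (fun z' => deriv (deriv U) z' * φ x z' + deriv U z' * Ψ (x, z')) z := by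
          rw [dZ]; congr 1; funext z'; exact hinner z'
      _ = _ := by rw [houter.deriv]; ring
    -- pieces
  set q1 : ℝ × ℝ → ℝ := fun p => dZ b p.1 p.2 with hq1def
  set q0 : ℝ × ℝ → ℝ := fun p => b p.1 p.2 with hq0def
  set f1 : ℝ × ℝ → ℝ := fun p => (μ - 1) * (deriv U p.2 * pdz Ψ p) with hf1def
  set f2 : ℝ × ℝ → ℝ := fun p => 2 * (deriv (deriv U) p.2 * Ψ p) with hf2def
  set f3 : ℝ × ℝ → ℝ := fun p => deriv (deriv (deriv U)) p.2 * φ p.1 p.2 with hf3def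
  set K : ℝ × ℝ → ℝ := fun p => f1 p - f2 p - f3 p with hKdef
  set T : ℝ × ℝ → ℝ := fun p => tu p.1 p.2 with hTdef
  have hq0Ψ : ∀ p : ℝ × ℝ, q0 p = -Ψ p := fun p => hbeq p.1 p.2
  have hq1Ψ : ∀ p : ℝ × ℝ, q1 p = -(pdz Ψ p) := fun p => hdZb p.1 p.2
  -- rewrite the integrand
  have hEq : (fun p : ℝ × ℝ => (μ * deriv U p.2 * dZ (dZ φ) p.1 p.2
      - dZ (dZ (fun x z => deriv U z * φ x z)) p.1 p.2) * tu p.1 p.2)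
      = fun p => K p * T p := by
    funext p
    rw [hdZdZφ p.1 p.2, hG p.1 p.2]
    show (μ * deriv U p.2 * pdz Ψ (p.1, p.2) - _) * tu p.1 p.2
      = (f1 p - f2 p - f3 p) * tu p.1 p.2
    rw [hf1def, hf2def, hf3def]
    ring
  rw [hEq] at hprodInt ⊢
  -- continuity
  have hΨc : Continuous Ψ := hΨ.continuous
  have hpdzΨc : Continuous (pdz Ψ) := (pdz_contDiff hΨ).continuous
  have hφc : Continuous Φ := hφ'.continuous
  have hf1c : Continuous f1 :=
    continuous_const.mul ((hu1.continuous.comp continuous_snd).mul hpdzΨc)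
  have hf2c : Continuous f2 :=
    continuous_const.mul ((hu2.continuous.comp continuous_snd).mul hΨc)
  have hf3c : Continuous f3 := (hu3c.comp continuous_snd).mul hφc
  have hKc : Continuous K := (hf1c.sub hf2c).sub hf3c
  -- the set where K ≠ 0
  set S : Set (ℝ × ℝ) := {p | K p ≠ 0} with hSdef
  have hS : MeasurableSet S := (measurableSet_singleton (0:ℝ)).compl.preimage hKc.measurable
  have htuS : AEStronglyMeasurable T (μΩ.restrict S) := by
    have h1 : AEStronglyMeasurable (fun p => (K p * T p) / K p) (μΩ.restrict S) :=
      (hprodInt.aemeasurable.restrict.div hKc.measurable.aemeasurable.restrict).aestronglyMeasurable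
    refine h1.congr ?_
    rw [Filter.EventuallyEq, ae_restrict_iff' hS]
    filter_upwards with p hp
    exact mul_div_cancel_left₀ (T p) hp
  -- a.e. positivity of the second coordinate
  have haez : ∀ᵐ p ∂μΩ, 0 < p.2 := by
    rw [ae_iff]
    have hset : {p : ℝ × ℝ | ¬ (0 < p.2)} = univ ×ˢ Iic 0 := by
      ext p; simp [not_lt]
    rw [μΩ, hset, Measure.prod_prod, Measure.restrict_apply measurableSet_Iic]
    have : Iic (0:ℝ) ∩ Ioi 0 = ∅ := by
      ext z; simp only [mem_inter_iff, mem_Iic, mem_Ioi, mem_empty_iff_false, iff_false]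
      rintro ⟨h1, h2⟩; linarith
    rw [this]
    simp
    -- the weighted function w = φ / z
  set w : ℝ × ℝ → ℝ := fun p => φ p.1 p.2 / p.2 with hwdef
  have hwmeas : Measurable w := hφc.measurable.div measurable_snd
  have hq0c : Continuous q0 := by
    have : q0 = fun p => -Ψ p := funext hq0Ψ
    rw [this]; exact hΨc.neg
  have hq1c : Continuous q1 := by
    have : q1 = fun p => -(pdz Ψ p) := funext hq1Ψ
    rw [this]; exact hpdzΨc.neg
  have hbsq_nonneg : (0:ℝ) ≤ sqL2 b := integral_nonneg fun p => sq_nonneg _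
  have hdbsq_nonneg : (0:ℝ) ≤ sqL2 (dZ b) := integral_nonneg fun p => sq_nonneg _
  have htusq_nonneg : (0:ℝ) ≤ sqL2 tu := integral_nonneg fun p => sq_nonneg _
  -- 2D Hardy inequality
  have hmeasw2 : Measurable fun p : ℝ × ℝ => ENNReal.ofReal (w p ^ 2) :=
    (hwmeas.pow_const 2).ennreal_ofReal
  have hmeasb2 : Measurable fun p : ℝ × ℝ => ENNReal.ofReal (q0 p ^ 2) :=
    ((hq0c.measurable).pow_const 2).ennreal_ofReal
  have hperx : ∀ x : ℝ, ∫⁻ z in Ioi (0:ℝ), ENNReal.ofReal (w (x, z) ^ 2)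
      ≤ 6 * ∫⁻ z in Ioi (0:ℝ), ENNReal.ofReal (q0 (x, z) ^ 2) := by
    intro x
    by_cases htop : ∫⁻ z in Ioi (0:ℝ), ENNReal.ofReal (q0 (x, z) ^ 2) = ⊤
    · rw [htop]
      simp [ENNReal.mul_top]
    · have hfx : ContDiff ℝ (⊤:ℕ∞) (fun z => φ x z) :=
        hφ'.comp (contDiff_const.prodMk contDiff_id)
      have hderiv_eq : ∀ z, deriv (fun z' => φ x z') z ^ 2 = q0 (x, z) ^ 2 := by
        intro z
        rw [(hψ x z).deriv, hq0Ψ (x, z)]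
        ring
      have hbxc : Continuous (fun z => q0 (x, z)) := hq0c.comp (Continuous.prodMk_right x)
      have hbx : IntegrableOn (fun z => q0 (x, z) ^ 2) (Ioi 0) := by
        constructor
        · exact (hbxc.pow 2).aestronglyMeasurable
        · rw [hasFiniteIntegral_iff_ofReal (by filter_upwards with z using sq_nonneg _)]
          exact lt_top_iff_ne_top.mpr htop
      have hgx : IntegrableOn (fun z => deriv (fun z' => φ x z') z ^ 2) (Ioi 0) := by
        refine hbx.congr_fun ?_ measurableSet_Ioi
        intro z _; exact (hderiv_eq z).symm
      have h6 := hardy_lintegral hfx (hφ0 x) hgx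
      have e1 : ∫ z in Ioi (0:ℝ), deriv (fun z' => φ x z') z ^ 2
          = ∫ z in Ioi (0:ℝ), q0 (x, z) ^ 2 :=
        integral_congr_ae (Eventually.of_forall fun z => hderiv_eq z)
      rw [e1] at h6
      refine h6.trans ?_
      rw [ENNReal.ofReal_mul (by norm_num : (0:ℝ) ≤ 6),
        ofReal_integral_eq_lintegral_ofReal hbx
          (by filter_upwards with z using sq_nonneg _)]
      gcongr
      · norm_num
  have hbig : ∫⁻ p, ENNReal.ofReal (w p ^ 2) ∂μΩ ≤ ENNReal.ofReal (6 * sqL2 b) := by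
    have hprod1 : ∫⁻ p, ENNReal.ofReal (w p ^ 2) ∂μΩ
        = ∫⁻ x in Ioc (0:ℝ) 1, ∫⁻ z in Ioi (0:ℝ), ENNReal.ofReal (w (x, z) ^ 2) := by
      rw [μΩ]; exact lintegral_prod _ hmeasw2.aemeasurable
    have hprod2 : ∫⁻ p, ENNReal.ofReal (q0 p ^ 2) ∂μΩ
        = ∫⁻ x in Ioc (0:ℝ) 1, ∫⁻ z in Ioi (0:ℝ), ENNReal.ofReal (q0 (x, z) ^ 2) := by
      rw [μΩ]; exact lintegral_prod _ hmeasb2.aemeasurable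
    calc ∫⁻ p, ENNReal.ofReal (w p ^ 2) ∂μΩ
        = ∫⁻ x in Ioc (0:ℝ) 1, ∫⁻ z in Ioi (0:ℝ), ENNReal.ofReal (w (x, z) ^ 2) := hprod1
      _ ≤ ∫⁻ x in Ioc (0:ℝ) 1, 6 * ∫⁻ z in Ioi (0:ℝ), ENNReal.ofReal (q0 (x, z) ^ 2) :=
          lintegral_mono fun x => hperx x
      _ = 6 * ∫⁻ x in Ioc (0:ℝ) 1, ∫⁻ z in Ioi (0:ℝ), ENNReal.ofReal (q0 (x, z) ^ 2) :=
          lintegral_const_mul' _ _ (by norm_num)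
      _ = 6 * ∫⁻ p, ENNReal.ofReal (q0 p ^ 2) ∂μΩ := by rw [hprod2]
      _ = ENNReal.ofReal (6 * sqL2 b) := by
          rw [← ofReal_integral_eq_lintegral_ofReal hbInt
            (by filter_upwards with p using sq_nonneg _)]
          rw [ENNReal.ofReal_mul (by norm_num : (0:ℝ) ≤ 6)]
          rw [sqL2]
          norm_num
  have hwInt : Integrable (fun p => w p ^ 2) μΩ := by
    constructor
    · exact (hwmeas.pow_const 2).aestronglyMeasurable
    · rw [hasFiniteIntegral_iff_ofReal (by filter_upwards with p using sq_nonneg _)]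
      exact lt_of_le_of_lt hbig ENNReal.ofReal_lt_top
  have hwLe : ∫ p, w p ^ 2 ∂μΩ ≤ 6 * sqL2 b := by
    rw [integral_eq_lintegral_of_nonneg_ae
      (by filter_upwards with p using sq_nonneg _) hwInt.aestronglyMeasurable]
    exact ENNReal.toReal_le_of_le_ofReal (by positivity) hbig
    -- reduce the integral to S
  have hIS : ∫ p, K p * T p ∂μΩ = ∫ p in S, K p * T p ∂μΩ := by
    rw [← integral_add_compl hS hprodInt]
    have h0 : ∫ p in Sᶜ, K p * T p ∂μΩ = 0 := by
      apply setIntegral_eq_zero_of_forall_eq_zero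
      intro p hp
      have hKp : K p = 0 := not_not.mp hp
      rw [hKp, zero_mul]
    rw [h0, add_zero]
  have haezS : ∀ᵐ p ∂(μΩ.restrict S), 0 < p.2 := ae_restrict_of_ae haez
  have hsq1 : sqL2 (dZ b) = ∫ p, q1 p ^ 2 ∂μΩ := rfl
  have hsq0 : sqL2 b = ∫ p, q0 p ^ 2 ∂μΩ := rfl
  have hsqT : sqL2 tu = ∫ p, T p ^ 2 ∂μΩ := rfl
  -- pointwise bounds
  have hbd1 : ∀ᵐ p ∂(μΩ.restrict S), f1 p ^ 2 ≤ (|μ - 1| * M₁) ^ 2 * q1 p ^ 2 := by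
    filter_upwards [haezS] with p hp
    have h1 : deriv U p.2 ^ 2 ≤ M₁ ^ 2 := by
      nlinarith [hM₁ p.2 (mem_Ici.mpr hp.le), abs_nonneg (deriv U p.2), sq_abs (deriv U p.2)]
    have h3 : pdz Ψ p = -q1 p := by rw [hq1Ψ p]; ring
    calc f1 p ^ 2 = (μ - 1) ^ 2 * deriv U p.2 ^ 2 * q1 p ^ 2 := by
          simp only [hf1def]; rw [h3]; ring
      _ ≤ (μ - 1) ^ 2 * M₁ ^ 2 * q1 p ^ 2 :=
          mul_le_mul_of_nonneg_right
            (mul_le_mul_of_nonneg_left h1 (sq_nonneg _)) (sq_nonneg _)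
      _ = (|μ - 1| * M₁) ^ 2 * q1 p ^ 2 := by rw [mul_pow, sq_abs]
  have hbd2 : ∀ᵐ p ∂(μΩ.restrict S), f2 p ^ 2 ≤ (2 * M₂) ^ 2 * q0 p ^ 2 := by
    filter_upwards [haezS] with p hp
    have h1 : deriv (deriv U) p.2 ^ 2 ≤ M₂ ^ 2 := by
      nlinarith [hM₂ p.2 (mem_Ici.mpr hp.le), abs_nonneg (deriv (deriv U) p.2),
        sq_abs (deriv (deriv U) p.2)]
    have h3 : Ψ p = -q0 p := by rw [hq0Ψ p]; ring
    calc f2 p ^ 2 = 2 ^ 2 * deriv (deriv U) p.2 ^ 2 * q0 p ^ 2 := by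
          simp only [hf2def]; rw [h3]; ring
      _ ≤ 2 ^ 2 * M₂ ^ 2 * q0 p ^ 2 :=
          mul_le_mul_of_nonneg_right
            (mul_le_mul_of_nonneg_left h1 (by norm_num)) (sq_nonneg _)
      _ = (2 * M₂) ^ 2 * q0 p ^ 2 := by rw [mul_pow]
  have hbd3 : ∀ᵐ p ∂(μΩ.restrict S), f3 p ^ 2 ≤ M₃ ^ 2 * w p ^ 2 := by
    filter_upwards [haezS] with p hp
    have hz : p.2 ≠ 0 := hp.ne'
    have hφw : φ p.1 p.2 = p.2 * w p := by rw [hwdef]; field_simp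
    have h1 : (p.2 * deriv (deriv (deriv U)) p.2) ^ 2 ≤ M₃ ^ 2 := by
      nlinarith [hM₃ p.2 (mem_Ici.mpr hp.le),
        abs_nonneg (p.2 * deriv (deriv (deriv U)) p.2),
        sq_abs (p.2 * deriv (deriv (deriv U)) p.2)]
    calc f3 p ^ 2 = (p.2 * deriv (deriv (deriv U)) p.2) ^ 2 * w p ^ 2 := by
          simp only [hf3def]; rw [hφw]; ring
      _ ≤ M₃ ^ 2 * w p ^ 2 := mul_le_mul_of_nonneg_right h1 (sq_nonneg _)
  -- integral bounds on S
  have hQ1 : ∫ p, q1 p ^ 2 ∂(μΩ.restrict S) ≤ sqL2 (dZ b) := by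
    rw [hsq1]
    exact setIntegral_le_integral hdbInt (by filter_upwards with p using sq_nonneg _)
  have hQ0 : ∫ p, q0 p ^ 2 ∂(μΩ.restrict S) ≤ sqL2 b := by
    rw [hsq0]
    exact setIntegral_le_integral hbInt (by filter_upwards with p using sq_nonneg _)
  have hQw : ∫ p, w p ^ 2 ∂(μΩ.restrict S) ≤ 9 * sqL2 b := by
    refine (setIntegral_le_integral hwInt (by filter_upwards with p using sq_nonneg _)).trans ?_
    linarith
  have hQT : ∫ p, T p ^ 2 ∂(μΩ.restrict S) ≤ sqL2 tu := by
    rw [hsqT]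
    exact setIntegral_le_integral htuInt (by filter_upwards with p using sq_nonneg _)
  -- the three piece bounds
  have hp1 : |∫ p in S, f1 p * T p ∂μΩ|
      ≤ (|μ - 1| * M₁) * Real.sqrt (sqL2 (dZ b)) * Real.sqrt (sqL2 tu) :=
    piece_bound (μΩ.restrict S) f1 T q1 (|μ - 1| * M₁) (by positivity)
      hf1c.aestronglyMeasurable.restrict htuS hdbInt.restrict hbd1 htuInt.restrict
      hQ1 hQT hdbsq_nonneg
  have hp2 : |∫ p in S, f2 p * T p ∂μΩ|
      ≤ (2 * M₂) * Real.sqrt (sqL2 b) * Real.sqrt (sqL2 tu) :=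
    piece_bound (μΩ.restrict S) f2 T q0 (2 * M₂) (by positivity)
      hf2c.aestronglyMeasurable.restrict htuS hbInt.restrict hbd2 htuInt.restrict
      hQ0 hQT hbsq_nonneg
  have hp3 : |∫ p in S, f3 p * T p ∂μΩ|
      ≤ M₃ * Real.sqrt (9 * sqL2 b) * Real.sqrt (sqL2 tu) :=
    piece_bound (μΩ.restrict S) f3 T w M₃ hM₃0
      hf3c.aestronglyMeasurable.restrict htuS hwInt.restrict hbd3 htuInt.restrict
      hQw hQT (by linarith)
  -- split the integral
  have i1 : Integrable (fun p => f1 p * T p) (μΩ.restrict S) :=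
    int_mul _ _ _ hf1c.aestronglyMeasurable.restrict htuS
      (sq_int hf1c.aestronglyMeasurable.restrict hdbInt.restrict hbd1) htuInt.restrict
  have i2 : Integrable (fun p => f2 p * T p) (μΩ.restrict S) :=
    int_mul _ _ _ hf2c.aestronglyMeasurable.restrict htuS
      (sq_int hf2c.aestronglyMeasurable.restrict hbInt.restrict hbd2) htuInt.restrict
  have i3 : Integrable (fun p => f3 p * T p) (μΩ.restrict S) :=
    int_mul _ _ _ hf3c.aestronglyMeasurable.restrict htuS
      (sq_int hf3c.aestronglyMeasurable.restrict hwInt.restrict hbd3) htuInt.restrict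
  have hsplitInt : ∫ p in S, K p * T p ∂μΩ
      = (∫ p in S, f1 p * T p ∂μΩ) - (∫ p in S, f2 p * T p ∂μΩ)
        - (∫ p in S, f3 p * T p ∂μΩ) := by
    have e2 := integral_sub (μ := μΩ.restrict S) i1 i2
    have e3 := integral_sub (μ := μΩ.restrict S) (i1.sub i2) i3
    simp only [Pi.sub_apply] at e3
    rw [show (fun p => K p * T p) = fun p => (f1 p * T p - f2 p * T p) - f3 p * T p
      from funext fun p => by simp only [hKdef]; ring]
    rw [e3, e2]
  -- conclude
  have h9 : Real.sqrt (9 * sqL2 b) = 3 * Real.sqrt (sqL2 b) := by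
    rw [show (9:ℝ) = 3 ^ 2 by norm_num, Real.sqrt_mul (by positivity), Real.sqrt_sq (by norm_num)]
  have habs : ∀ a b c : ℝ, |a - b - c| ≤ |a| + |b| + |c| := by
    intro a b c
    have h1 : |a - b - c| ≤ |a - b| + |c| := by
      simpa [sub_eq_add_neg, abs_neg] using abs_add_le (a - b) (-c)
    have h2 : |a - b| ≤ |a| + |b| := by
      simpa [sub_eq_add_neg, abs_neg] using abs_add_le a (-b)
    linarith
  have hs0 := Real.sqrt_nonneg (sqL2 b)
  have hd0 := Real.sqrt_nonneg (sqL2 (dZ b))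
  have ht0 := Real.sqrt_nonneg (sqL2 tu)
  calc |∫ p, K p * T p ∂μΩ| = |∫ p in S, K p * T p ∂μΩ| := by rw [hIS]
    _ ≤ |∫ p in S, f1 p * T p ∂μΩ| + |∫ p in S, f2 p * T p ∂μΩ|
        + |∫ p in S, f3 p * T p ∂μΩ| := by rw [hsplitInt]; exact habs _ _ _
    _ ≤ (|μ - 1| * M₁) * Real.sqrt (sqL2 (dZ b)) * Real.sqrt (sqL2 tu)
        + (2 * M₂) * Real.sqrt (sqL2 b) * Real.sqrt (sqL2 tu)
        + M₃ * Real.sqrt (9 * sqL2 b) * Real.sqrt (sqL2 tu) :=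
      add_le_add (add_le_add hp1 hp2) hp3
    _ ≤ (|μ - 1| * M₁ + 2 * M₂ + 3 * M₃ + 1)
        * (Real.sqrt (sqL2 b) + Real.sqrt (sqL2 (dZ b))) * Real.sqrt (sqL2 tu) := by
      rw [h9]
      nlinarith [mul_nonneg hs0 ht0, mul_nonneg hd0 ht0, abs_nonneg (μ - 1),
        mul_nonneg (abs_nonneg (μ - 1)) hM₁0,
        mul_nonneg (mul_nonneg (abs_nonneg (μ - 1)) hM₁0) (mul_nonneg hs0 ht0),
        mul_nonneg hM₂0 (mul_nonneg hd0 ht0), mul_nonneg hM₃0 (mul_nonneg hd0 ht0),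
        mul_nonneg (mul_nonneg (abs_nonneg (μ - 1)) hM₁0) (mul_nonneg hs0 ht0)]
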